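/- arXiv:2003.11324 — 2 statements merged into one kernel-verified Lean document; each statement's English description precedes it below -/
import Mathlib

section
/- Let n ≥ 7 and let H ≤ S_n be a subgroup that fixes pointwise a set B ⊆ {1,…,n} of cardinality r ≥ 1; set A = {1,…,n} \ B, and assume H has no fixed points in A. Let d be an integer with r + 1 < d ≤ (n−r)/2 such that O_{r+1}(H) = O_{r+2}(H) = ⋯ = O_d(H). Then H acts d-homogeneously on A. -/
open Pointwise

/-- The number of orbits of a group `H` acting on a finite set `Ω` on the collection
of finsets of `Ω` satisfying the predicate `P` (for the induced action on finsets). -/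
noncomputable def numOrbits (H : Type*) [Group H] {Ω : Type*} [DecidableEq Ω] [MulAction H Ω]
    (P : Finset Ω → Prop) : ℕ :=
  Nat.card (Quot (fun S T : {S : Finset Ω // P S} => ∃ h : H, h • S.val = T.val))

/-- A subgroup `H` of `Sym(Ω)` acts `d`-homogeneously on `A ⊆ Ω` if it is
transitive on `d`-element subsets of `A`. -/
def IsHomogeneousOn {Ω : Type*} [DecidableEq Ω] (H : Subgroup (Equiv.Perm Ω))
    (A : Finset Ω) (d : ℕ) : Prop :=
  ∀ S T : Finset Ω, S ⊆ A → T ⊆ A → S.card = d → T.card = d → ∃ h ∈ H, h • S = T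

/-!
Write `o(m)` for the number of orbits of `H` on `m`-subsets of `A = Bᶜ`. As `H` fixes `B`
pointwise, a `k`-subset of `{1,…,n}` is determined up to `H` by its trace `J ⊆ B` and the orbit
of its part in `A`, so `O_k(H) = ∑_{J ⊆ B} o(k - |J|)`. By the Livingstone–Wagner inequality,
`o(m) ≤ o(m + 1)` for `2m < |A|`: the up operator `f ↦ (T ↦ ∑_{y ∈ T} f(T \ {y}))` is injective
on functions on `m`-subsets, and it maps invariant functions to invariant functions. Hence
`O_k = O_{k+1}` forces `o(m) = o(m + 1)` for every `m = k - |J|`, and letting `k` run over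
`r+1, …, d-1` gives `o(1) = o(2) = ⋯ = o(d)`. Finally, a group without fixed points on `A` and
with `o(1) = o(2)` is transitive on `A`: otherwise a pair meeting two point orbits would give an
extra orbit on pairs. So `o(d) = o(1) = 1`.
-/

open Finset

namespace Finset

variable {Ω R : Type*} [DecidableEq Ω]

section CommRing
variable [CommRing R]

def shadowSum (f : Finset Ω → R) (T : Finset Ω) : R := ∑ y ∈ T, f (T.erase y)

def upShadowSum (A : Finset Ω) (f : Finset Ω → R) (S : Finset Ω) : R :=
  ∑ x ∈ A \ S, f (insert x S)

theorem sum_shadowSum_mul (A : Finset Ω) (k : ℕ) (f g : Finset Ω → R) :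
    ∑ T ∈ A.powersetCard (k + 1), shadowSum f T * g T =
      ∑ S ∈ A.powersetCard k, f S * upShadowSum A g S := by
  simp only [shadowSum, upShadowSum, sum_mul, mul_sum]
  rw [sum_sigma', sum_sigma']
  refine sum_nbij' (fun p => ⟨p.1.erase p.2, p.2⟩) (fun p => ⟨insert p.2 p.1, p.2⟩)
    ?_ ?_ ?_ ?_ ?_
  · rintro ⟨T, y⟩ hp
    simp only [mem_sigma, mem_powersetCard] at hp ⊢
    obtain ⟨⟨hTA, hTk⟩, hyT⟩ := hp
    exact ⟨⟨(erase_subset _ _).trans hTA, by rw [card_erase_of_mem hyT, hTk]; rfl⟩,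
      by simp [hTA hyT]⟩
  · rintro ⟨S, x⟩ hp
    simp only [mem_sigma, mem_powersetCard, mem_sdiff] at hp ⊢
    obtain ⟨⟨hSA, hSk⟩, hxA, hxS⟩ := hp
    exact ⟨⟨insert_subset hxA hSA, by rw [card_insert_of_notMem hxS, hSk]⟩, mem_insert_self _ _⟩
  · rintro ⟨T, y⟩ hp
    simp only [mem_sigma] at hp
    simp [insert_erase hp.2]
  · rintro ⟨S, x⟩ hp
    simp only [mem_sigma, mem_sdiff] at hp
    simp [erase_insert hp.2.2]
  · rintro ⟨T, y⟩ hp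
    simp only [mem_sigma] at hp
    simp [insert_erase hp.2]

theorem upShadowSum_shadowSum {A S : Finset Ω} {k : ℕ} (hS : S ∈ A.powersetCard k)
    (f : Finset Ω → R) :
    upShadowSum A (shadowSum f) S = shadowSum (upShadowSum A f) S + (#A - 2 * k : R) * f S := by
  rw [mem_powersetCard] at hS
  obtain ⟨hSA, rfl⟩ := hS
  have hleft : ∀ x ∈ A \ S, shadowSum f (insert x S) =
      f S + ∑ y ∈ S, f (insert x (S.erase y)) := by
    intro x hx
    have hxS := (mem_sdiff.mp hx).2
    rw [shadowSum, sum_insert hxS, erase_insert hxS]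
    congr 1
    exact sum_congr rfl fun y hy => by rw [erase_insert_of_ne (by rintro rfl; exact hxS hy)]
  have hright : ∀ y ∈ S, upShadowSum A f (S.erase y) =
      f S + ∑ x ∈ A \ S, f (insert x (S.erase y)) := by
    intro y hy
    rw [upShadowSum, sdiff_erase (hSA hy), sum_insert (by simp [hy]), insert_erase hy]
  rw [upShadowSum, shadowSum, sum_congr rfl hleft, sum_congr rfl hright, sum_add_distrib,
    sum_add_distrib, sum_const, sum_const, card_sdiff_of_subset hSA, sum_comm, nsmul_eq_mul,
    nsmul_eq_mul, Nat.cast_sub (card_le_card hSA)]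
  ring

end CommRing

section OrderedRing
variable [CommRing R] [LinearOrder R] [IsStrictOrderedRing R]

theorem sum_shadowSum_upShadowSum_mul_nonneg (A : Finset Ω) (k : ℕ) (f : Finset Ω → R) :
    0 ≤ ∑ S ∈ A.powersetCard k, shadowSum (upShadowSum A f) S * f S := by
  cases k with
  | zero =>
    refine sum_nonneg fun S hS => ?_
    rw [card_eq_zero.mp (mem_powersetCard.mp hS).2, shadowSum, sum_empty, zero_mul]
  | succ j =>
    rw [sum_shadowSum_mul]
    exact sum_nonneg fun S _ => mul_self_nonneg _

/-- Summed over `k`-subsets of `A`, the two identities above give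
`∑ (shadowSum f)² = ∑ (upShadowSum A f)² + (#A - 2k) ∑ f²`. -/
theorem eq_zero_of_shadowSum_eq_zero {A : Finset Ω} {k : ℕ} (hk : 2 * k < #A)
    {f : Finset Ω → R} (hf : ∀ T ∈ A.powersetCard (k + 1), shadowSum f T = 0) :
    ∀ S ∈ A.powersetCard k, f S = 0 := by
  have hpos : (0 : R) < #A - 2 * k := sub_pos.mpr (by exact_mod_cast hk)
  have hsum : 0 = ∑ S ∈ A.powersetCard k, shadowSum (upShadowSum A f) S * f S +
      (#A - 2 * k : R) * ∑ S ∈ A.powersetCard k, f S * f S := by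
    calc (0 : R) = ∑ T ∈ A.powersetCard (k + 1), shadowSum f T * shadowSum f T :=
          (sum_eq_zero fun T hT => by rw [hf T hT, zero_mul]).symm
      _ = ∑ S ∈ A.powersetCard k, f S * upShadowSum A (shadowSum f) S := sum_shadowSum_mul ..
      _ = _ := by
          rw [mul_sum, ← sum_add_distrib]
          refine sum_congr rfl fun S hS => ?_
          rw [upShadowSum_shadowSum hS]
          ring
  have hsq : ∑ S ∈ A.powersetCard k, f S * f S = 0 := by
    have := sum_shadowSum_upShadowSum_mul_nonneg A k f
    have : 0 ≤ ∑ S ∈ A.powersetCard k, f S * f S := sum_nonneg fun S _ => mul_self_nonneg _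
    nlinarith
  exact fun S hS => mul_self_eq_zero.mp ((sum_eq_zero_iff_of_nonneg fun S _ =>
    mul_self_nonneg (f S)).mp hsq S hS)

end OrderedRing

section SMul
variable {G : Type*} [Group G] [MulAction G Ω]

theorem smul_finset_eq_self_of_forall {g : G} {B : Finset Ω} (h : ∀ b ∈ B, g • b = b) :
    g • B = B := by
  rw [smul_finset_def, image_congr h, image_id']

theorem smul_finset_compl [Fintype Ω] (g : G) (B : Finset Ω) : g • Bᶜ = (g • B)ᶜ := by
  rw [compl_eq_univ_sdiff, compl_eq_univ_sdiff, smul_finset_sdiff, smul_finset_univ]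

theorem smul_finset_mem_powersetCard_iff {A : Finset Ω} {g : G} (hA : g • A = A)
    {S : Finset Ω} {m : ℕ} : g • S ∈ A.powersetCard m ↔ S ∈ A.powersetCard m := by
  rw [mem_powersetCard, mem_powersetCard, card_smul_finset]
  conv_lhs => rw [← hA, smul_finset_subset_smul_finset_iff]

theorem shadowSum_smul [CommRing R] {f : Finset Ω → R} {g : G} (hf : ∀ S, f (g • S) = f S)
    (T : Finset Ω) : shadowSum f (g • T) = shadowSum f T := by
  have herase (y : Ω) : (g • T).erase (g • y) = g • T.erase y := by
    rw [erase_eq, erase_eq, smul_finset_sdiff, smul_finset_singleton]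
  rw [shadowSum, shadowSum, smul_finset_def,
    sum_image fun x _ y _ => (MulAction.injective g).eq_iff.mp]
  exact sum_congr rfl fun y _ => by rw [← smul_finset_def, herase, hf]

end SMul

end Finset

def quotSigmaEquiv {ι κ : Type*} (p : ι → κ → Prop) (r : κ → κ → Prop) :
    Quot (fun x y : Σ i, Subtype (p i) => x.1 = y.1 ∧ r x.2.val y.2.val) ≃
      Σ i, Quot (fun a b : Subtype (p i) => r a.val b.val) where
  toFun := Quot.lift (fun x => ⟨x.1, Quot.mk _ x.2⟩) fun ⟨i, a⟩ ⟨j, b⟩ ⟨hij, hab⟩ => by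
    dsimp only at hij
    subst hij
    exact congrArg (Sigma.mk i) (Quot.sound hab)
  invFun x := Quot.lift (fun a => Quot.mk _ ⟨x.1, a⟩) (fun _ _ h => Quot.sound ⟨rfl, h⟩) x.2
  left_inv := Quot.ind fun _ => rfl
  right_inv := fun ⟨_, q⟩ => by induction q using Quot.ind; rfl

section FinsetOrbits
variable (G : Type*) {Ω : Type*} [Group G] [MulAction G Ω] [DecidableEq Ω]

def FinsetOrbitRel (P : Finset Ω → Prop) (S T : {S : Finset Ω // P S}) : Prop :=
  ∃ g : G, g • S.val = T.val

abbrev FinsetOrbits (P : Finset Ω → Prop) : Type _ := Quot (FinsetOrbitRel G P)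

theorem numOrbits_eq_card (P : Finset Ω → Prop) : numOrbits G P = Nat.card (FinsetOrbits G P) :=
  rfl

instance (s : Finset (Finset Ω)) : Finite (FinsetOrbits G (· ∈ s)) := Quot.finite _

theorem equivalence_finsetOrbitRel (P : Finset Ω → Prop) : Equivalence (FinsetOrbitRel G P) where
  refl _ := ⟨1, one_smul _ _⟩
  symm := fun ⟨g, e⟩ => ⟨g⁻¹, by rw [← e, inv_smul_smul]⟩
  trans := fun ⟨g, e⟩ ⟨g', e'⟩ => ⟨g' * g, by rw [mul_smul, e, e']⟩

end FinsetOrbits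

namespace FinsetOrbits
variable {G Ω : Type*} [Group G] [MulAction G Ω] [DecidableEq Ω]

theorem mk_eq_mk_iff {P : Finset Ω → Prop} {S T : {S // P S}} :
    (Quot.mk _ S : FinsetOrbits G P) = Quot.mk _ T ↔ ∃ g : G, g • S.val = T.val :=
  Quot.eq.trans (equivalence_finsetOrbitRel G P).eqvGen_iff

section ExtendByZero
variable {P : Finset Ω → Prop}

open scoped Classical in
noncomputable def extendByZero : (FinsetOrbits G P → ℚ) →ₗ[ℚ] (Finset Ω → ℚ) where
  toFun φ E := if h : P E then φ (Quot.mk _ ⟨E, h⟩) else 0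
  map_add' φ ψ := by ext E; by_cases h : P E <;> simp [h]
  map_smul' c φ := by ext E; by_cases h : P E <;> simp [h]

theorem extend_mk (φ : FinsetOrbits G P → ℚ) (S : {S // P S}) :
    extendByZero φ S.val = φ (Quot.mk _ S) := by
  simp [extendByZero, S.2]

theorem extend_smul (hP : ∀ (g : G) S, P (g • S) ↔ P S) (φ : FinsetOrbits G P → ℚ) (g : G)
    (E : Finset Ω) : extendByZero φ (g • E) = extendByZero φ E := by
  by_cases hE : P E
  · rw [extend_mk φ ⟨E, hE⟩, extend_mk φ ⟨g • E, (hP g E).mpr hE⟩]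
    exact congrArg φ (Quot.sound ⟨g⁻¹, inv_smul_smul g E⟩)
  · simp [extendByZero, hE, hP]

end ExtendByZero

section ShadowSum
variable {A : Finset Ω} (hA : ∀ g : G, g • A = A)

noncomputable def shadowSumMap (m : ℕ) :
    (FinsetOrbits G (· ∈ A.powersetCard m) → ℚ) →ₗ[ℚ]
      (FinsetOrbits G (· ∈ A.powersetCard (m + 1)) → ℚ) where
  toFun φ := Quot.lift (fun T => shadowSum (extendByZero φ) T.val) fun _ _ ⟨g, e⟩ => by
    rw [← e, shadowSum_smul (extend_smul (fun g _ => smul_finset_mem_powersetCard_iff (hA g)) φ g)]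
  map_add' φ ψ := by
    funext q
    induction q using Quot.ind
    simp [shadowSum, sum_add_distrib]
  map_smul' c φ := by
    funext q
    induction q using Quot.ind
    simp [shadowSum, mul_sum]

theorem shadowSumMap_injective {m : ℕ} (hm : 2 * m < #A) :
    Function.Injective (shadowSumMap hA m) := by
  rw [injective_iff_map_eq_zero]
  intro φ hφ
  have hzero := eq_zero_of_shadowSum_eq_zero hm fun T hT => congrFun hφ (Quot.mk _ ⟨T, hT⟩)
  funext q
  induction q using Quot.ind with
  | mk S => exact (extend_mk φ S).symm.trans (hzero S.val S.2)

end ShadowSum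

section PointOrbit
variable {A : Finset Ω}

def pointOrbit {a : Ω} (ha : a ∈ A) : FinsetOrbits G (· ∈ A.powersetCard 1) :=
  Quot.mk _ ⟨{a}, by simpa⟩

theorem pointOrbit_smul (g : G) {a : Ω} (ha : a ∈ A) (hga : g • a ∈ A) :
    pointOrbit (G := G) hga = pointOrbit ha :=
  (Quot.sound ⟨g, smul_finset_singleton a⟩).symm

theorem exists_pointOrbit_eq (q : FinsetOrbits G (· ∈ A.powersetCard 1)) :
    ∃ a, ∃ ha : a ∈ A, pointOrbit ha = q := by
  induction q using Quot.ind with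
  | mk S =>
    obtain ⟨hSA, hS⟩ := mem_powersetCard.mp S.2
    obtain ⟨a, ha⟩ := card_eq_one.mp hS
    exact ⟨a, hSA (ha ▸ mem_singleton_self a), congrArg _ (Subtype.ext ha.symm)⟩

def orbitType :
    FinsetOrbits G (· ∈ A.powersetCard 2) → Set (FinsetOrbits G (· ∈ A.powersetCard 1)) :=
  Quot.lift (fun T => {q | ∃ a ∈ T.1, ∃ ha : a ∈ A, pointOrbit ha = q}) fun S T ⟨g, e⟩ => by
    have hS := (mem_powersetCard.mp S.2).1
    have hT := (mem_powersetCard.mp T.2).1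
    ext q
    simp only [Set.mem_ofPred_eq, ← e, mem_smul_finset]
    constructor
    · rintro ⟨a, haS, ha, rfl⟩
      have hga : g • a ∈ A := hT (e ▸ smul_mem_smul_finset haS)
      exact ⟨g • a, ⟨a, haS, rfl⟩, hga, pointOrbit_smul g ha hga⟩
    · rintro ⟨_, ⟨a, haS, rfl⟩, hga, rfl⟩
      exact ⟨a, haS, hS haS, (pointOrbit_smul g _ hga).symm⟩

theorem orbitType_pair {a b : Ω} (ha : a ∈ A) (hb : b ∈ A) (hab : {a, b} ∈ A.powersetCard 2) :
    orbitType (Quot.mk _ ⟨{a, b}, hab⟩) = {pointOrbit (G := G) ha, pointOrbit hb} := by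
  ext q
  simp only [orbitType, Set.mem_ofPred_eq, mem_insert, mem_singleton, Set.mem_insert_iff,
    Set.mem_singleton_iff]
  constructor
  · rintro ⟨x, rfl | rfl, hx, rfl⟩
    exacts [.inl rfl, .inr rfl]
  · rintro (rfl | rfl)
    exacts [⟨a, .inl rfl, ha, rfl⟩, ⟨b, .inr rfl, hb, rfl⟩]

end PointOrbit

end FinsetOrbits

section Counting
variable {G Ω : Type*} [Group G] [MulAction G Ω] [DecidableEq Ω]
open FinsetOrbits

theorem numOrbits_powersetCard_le_succ {A : Finset Ω} (hA : ∀ g : G, g • A = A) {m : ℕ}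
    (hm : 2 * m < #A) :
    numOrbits G (· ∈ A.powersetCard m) ≤ numOrbits G (· ∈ A.powersetCard (m + 1)) := by
  have : Fintype (FinsetOrbits G (· ∈ A.powersetCard m)) := .ofFinite _
  have : Fintype (FinsetOrbits G (· ∈ A.powersetCard (m + 1))) := .ofFinite _
  rw [numOrbits_eq_card, numOrbits_eq_card, Nat.card_eq_fintype_card, Nat.card_eq_fintype_card]
  simpa only [Module.finrank_fintype_fun_eq_card] using
    LinearMap.finrank_le_finrank_of_injective (FinsetOrbits.shadowSumMap_injective hA hm)

section FixedSet
variable [Fintype Ω] (B : Finset Ω) {k : ℕ} (hk : #B ≤ k)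

def interSdiffEquiv : {S : Finset Ω // #S = k} ≃ Σ J : B.powerset, Bᶜ.powersetCard (k - #J.1) where
  toFun S := ⟨⟨S.1 ∩ B, mem_powerset.mpr inter_subset_right⟩, S.1 \ B, by
    rw [mem_powersetCard, card_sdiff, S.2, inter_comm, subset_compl_iff_disjoint_right]
    exact ⟨sdiff_disjoint, rfl⟩⟩
  invFun x := ⟨x.2.1 ∪ x.1.1, by
    obtain ⟨⟨J, hJ⟩, S, hS⟩ := x
    rw [mem_powerset] at hJ
    rw [mem_powersetCard, subset_compl_iff_disjoint_right] at hS
    rw [card_union_of_disjoint (disjoint_of_subset_right hJ hS.1), hS.2,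
      Nat.sub_add_cancel ((card_le_card hJ).trans hk)]⟩
  left_inv S := Subtype.ext (sdiff_union_inter _ _)
  right_inv := by
    rintro ⟨⟨J, hJ⟩, S, hS⟩
    rw [mem_powerset] at hJ
    rw [mem_powersetCard, subset_compl_iff_disjoint_right] at hS
    refine Sigma.subtype_ext (Subtype.ext ?_) ?_
    · simp [union_inter_distrib_right, disjoint_iff_inter_eq_empty.mp hS.1, inter_eq_left.mpr hJ]
    · simp [union_sdiff_distrib, sdiff_eq_self_of_disjoint hS.1, sdiff_eq_empty_iff_subset.mpr hJ]

variable {B} (hB : ∀ g : G, ∀ b ∈ B, g • b = b)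
include hk hB

theorem interSdiffEquiv_rel_iff (S T : {S : Finset Ω // #S = k}) :
    (∃ g : G, g • S.1 = T.1) ↔ (interSdiffEquiv B hk S).1 = (interSdiffEquiv B hk T).1 ∧
      ∃ g : G, g • (interSdiffEquiv B hk S).2.1 = (interSdiffEquiv B hk T).2.1 := by
  have hfix (g : G) (S : Finset Ω) : g • (S ∩ B) = S ∩ B :=
    smul_finset_eq_self_of_forall fun b hb => hB g b (mem_inter.mp hb).2
  have hgB (g : G) : g • B = B := smul_finset_eq_self_of_forall (hB g)
  simp only [interSdiffEquiv, Equiv.coe_fn_mk, Subtype.mk.injEq]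
  constructor
  · rintro ⟨g, e⟩
    refine ⟨?_, g, ?_⟩
    · rw [← e, ← hfix g, smul_finset_inter, hgB]
    · rw [← e, smul_finset_sdiff, hgB]
  · rintro ⟨hinter, g, e⟩
    refine ⟨g, ?_⟩
    rw [← sdiff_union_inter S.1 B, smul_finset_union, e, hfix, hinter, sdiff_union_inter]

theorem numOrbits_card_eq_sum :
    numOrbits G (fun S : Finset Ω => #S = k) =
      ∑ J ∈ B.powerset, numOrbits G (· ∈ Bᶜ.powersetCard (k - #J)) := by
  let e : FinsetOrbits G (fun S : Finset Ω => #S = k) ≃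
      Σ J : B.powerset, FinsetOrbits G (· ∈ Bᶜ.powersetCard (k - #J.1)) :=
    (Quot.congr (interSdiffEquiv B hk) (interSdiffEquiv_rel_iff hk hB)).trans
      (quotSigmaEquiv (fun J : B.powerset => (· ∈ Bᶜ.powersetCard (k - #J.1)))
        fun S T => ∃ g : G, g • S = T)
  rw [numOrbits_eq_card, Nat.card_congr e, Nat.card_sigma, ← sum_coe_sort B.powerset]
  rfl

theorem numOrbits_powersetCard_compl_succ_eq (h2k : 2 * k < #Bᶜ)
    (hO : numOrbits G (fun S : Finset Ω => #S = k + 1) ≤ numOrbits G (fun S : Finset Ω => #S = k))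
    {j : ℕ} (hj : j ≤ #B) :
    numOrbits G (· ∈ Bᶜ.powersetCard (k - j + 1)) = numOrbits G (· ∈ Bᶜ.powersetCard (k - j)) := by
  have hA (g : G) : g • Bᶜ = Bᶜ := by rw [smul_finset_compl, smul_finset_eq_self_of_forall (hB g)]
  have hsucc {J : Finset Ω} (hJ : J ⊆ B) : k + 1 - #J = k - #J + 1 :=
    Nat.sub_add_comm ((card_le_card hJ).trans hk)
  have hle : ∀ J ∈ B.powerset, numOrbits G (· ∈ Bᶜ.powersetCard (k - #J)) ≤
      numOrbits G (· ∈ Bᶜ.powersetCard (k + 1 - #J)) := fun J hJ => by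
    rw [hsucc (mem_powerset.mp hJ)]
    exact numOrbits_powersetCard_le_succ hA (by omega)
  rw [numOrbits_card_eq_sum hk hB, numOrbits_card_eq_sum (hk.trans k.le_succ) hB] at hO
  have heq := (sum_eq_sum_iff_of_le hle).mp ((sum_le_sum hle).antisymm hO)
  obtain ⟨J, hJB, rfl⟩ := exists_subset_card_eq hj
  rw [heq J (mem_powerset.mpr hJB), hsucc hJB]

end FixedSet

/-- Each point orbit `q` is the type of a pair `{a, g • a}`, while two distinct point orbits
would give one more orbit on pairs, of mixed type. -/
theorem numOrbits_powersetCard_one_le_one {A : Finset Ω} (hA : ∀ g : G, g • A = A)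
    (hmove : ∀ a ∈ A, ∃ g : G, g • a ≠ a)
    (h21 : numOrbits G (· ∈ A.powersetCard 2) ≤ numOrbits G (· ∈ A.powersetCard 1)) :
    numOrbits G (· ∈ A.powersetCard 1) ≤ 1 := by
  simp only [numOrbits_eq_card] at h21 ⊢
  by_contra! hlt
  obtain ⟨q₀, q₁, hq⟩ := (Finite.one_lt_card_iff_nontrivial.mp hlt).exists_pair_ne
  obtain ⟨a₀, ha₀, rfl⟩ := exists_pointOrbit_eq q₀
  obtain ⟨a₁, ha₁, rfl⟩ := exists_pointOrbit_eq q₁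
  have hpair {a b : Ω} (ha : a ∈ A) (hb : b ∈ A) (hab : a ≠ b) : {a, b} ∈ A.powersetCard 2 :=
    mem_powersetCard.mpr ⟨insert_subset ha (singleton_subset_iff.mpr hb), card_pair hab⟩
  have hpure (q : FinsetOrbits G (· ∈ A.powersetCard 1)) : ∃ p, orbitType p = {q} := by
    obtain ⟨a, ha, rfl⟩ := exists_pointOrbit_eq q
    obtain ⟨g, hg⟩ := hmove a ha
    have hga : g • a ∈ A := hA g ▸ smul_mem_smul_finset ha
    exact ⟨_, (orbitType_pair ha hga (hpair ha hga hg.symm)).trans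
      (by rw [pointOrbit_smul g ha hga, Set.pair_eq_singleton])⟩
  choose pureOf hpure using hpure
  let mixed : FinsetOrbits G (· ∈ A.powersetCard 2) :=
    Quot.mk _ ⟨{a₀, a₁}, hpair ha₀ ha₁ (by rintro rfl; exact hq rfl)⟩
  have hmixed (q : FinsetOrbits G (· ∈ A.powersetCard 1)) : orbitType mixed ≠ {q} := by
    rw [orbitType_pair ha₀ ha₁]
    intro h
    exact hq ((Set.eq_of_mem_singleton (h ▸ Set.mem_insert _ _)).trans
      (Set.eq_of_mem_singleton (h ▸ Set.mem_insert_of_mem _ rfl)).symm)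
  have hinj : Function.Injective (Sum.elim pureOf fun _ : Unit => mixed) := by
    rintro (q | _) (q' | _) h
    · exact congrArg _ (Set.singleton_injective
        ((hpure q).symm.trans ((congrArg orbitType h).trans (hpure q'))))
    · exact (hmixed q ((congrArg orbitType h).symm.trans (hpure q))).elim
    · exact (hmixed q' ((congrArg orbitType h).trans (hpure q'))).elim
    · rfl
  have := Nat.card_le_card_of_injective _ hinj
  rw [Nat.card_sum, Nat.card_eq_fintype_card (α := Unit), Fintype.card_unit] at this
  omega

end Counting

theorem isHomogeneousOn_of_numOrbits_le_one {Ω : Type*} [DecidableEq Ω]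
    {H : Subgroup (Equiv.Perm Ω)} {A : Finset Ω} {d : ℕ}
    (h : numOrbits H (· ∈ A.powersetCard d) ≤ 1) : IsHomogeneousOn H A d := by
  intro S T hS hT hSd hTd
  rw [numOrbits_eq_card, Finite.card_le_one_iff_subsingleton] at h
  obtain ⟨g, e⟩ := FinsetOrbits.mk_eq_mk_iff.mp (Subsingleton.elim
    (Quot.mk _ ⟨S, mem_powersetCard.mpr ⟨hS, hSd⟩⟩ : FinsetOrbits H (· ∈ A.powersetCard d))
    (Quot.mk _ ⟨T, mem_powersetCard.mpr ⟨hT, hTd⟩⟩))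
  exact ⟨g, g.2, e⟩

theorem stmt6_general (n r d : ℕ)
    (H : Subgroup (Equiv.Perm (Fin n))) (B : Finset (Fin n))
    (hBcard : B.card = r)
    (hfix : ∀ h ∈ H, ∀ b ∈ B, h b = b)
    (hnofix : ∀ a ∈ Bᶜ, ∃ h ∈ H, h a ≠ a)
    (hd1 : r + 1 < d) (hd2 : 2 * d ≤ n - r)
    (hO : ∀ k, r + 1 ≤ k → k ≤ d →
      numOrbits H (fun S : Finset (Fin n) => S.card = k)
        = numOrbits H (fun S : Finset (Fin n) => S.card = r + 1)) :
    IsHomogeneousOn H Bᶜ d := by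
  have hB (g : H) : ∀ b ∈ B, g • b = b := hfix g g.2
  have hA (g : H) : g • Bᶜ = Bᶜ := by rw [smul_finset_compl, smul_finset_eq_self_of_forall (hB g)]
  have hAcard : #Bᶜ = n - r := by rw [card_compl, hBcard, Fintype.card_fin]
  have hstep (m : ℕ) (hm : 1 ≤ m) (hmd : m < d) :
      numOrbits H (· ∈ Bᶜ.powersetCard (m + 1)) = numOrbits H (· ∈ Bᶜ.powersetCard m) := by
    -- any level `k` with `r < k < d` and `m ≤ k ≤ m + r` would do
    have hlevel := numOrbits_powersetCard_compl_succ_eq (k := max (r + 1) m) (by omega) hB (by omega)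
      ((hO _ (by omega) (by omega)).trans (hO _ (by omega) (by omega)).symm).le
      (j := max (r + 1) m - m) (by omega)
    rwa [Nat.sub_sub_self (le_max_right _ _)] at hlevel
  have hchain (m : ℕ) (hm : 1 ≤ m) (hmd : m ≤ d) :
      numOrbits H (· ∈ Bᶜ.powersetCard m) = numOrbits H (· ∈ Bᶜ.powersetCard 1) := by
    induction m, hm using Nat.le_induction with
    | base => rfl
    | succ m hm ih => rw [hstep m hm (by omega), ih (by omega)]
  have hmove (a : Fin n) (ha : a ∈ Bᶜ) : ∃ g : H, g • a ≠ a :=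
    let ⟨g, hg, hga⟩ := hnofix a ha
    ⟨⟨g, hg⟩, hga⟩
  exact isHomogeneousOn_of_numOrbits_le_one ((hchain d (by omega) le_rfl).trans_le
    (numOrbits_powersetCard_one_le_one hA hmove (hchain 2 (by omega) (by omega)).le))

/-- Lemma 3.5(2): if `H ≤ S_n` (`n ≥ 7`) fixes pointwise a set `B` of cardinality `r ≥ 1`,
`A` is the complement of `B`, `H` has no fixed points in `A`, and
`O_{r+1}(H) = ⋯ = O_d(H)` for some `r + 1 < d ≤ (n-r)/2`, then `H` acts
`d`-homogeneously on `A`. -/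
theorem stmt6 (n r d : ℕ) (hn : 7 ≤ n)
    (H : Subgroup (Equiv.Perm (Fin n))) (B : Finset (Fin n))
    (hBcard : B.card = r) (hr : 1 ≤ r)
    (hfix : ∀ h ∈ H, ∀ b ∈ B, h b = b)
    (hnofix : ∀ a ∈ Bᶜ, ∃ h ∈ H, h a ≠ a)
    (hd1 : r + 1 < d) (hd2 : 2 * d ≤ n - r)
    (hO : ∀ k, r + 1 ≤ k → k ≤ d →
      numOrbits H (fun S : Finset (Fin n) => S.card = k)
        = numOrbits H (fun S : Finset (Fin n) => S.card = r + 1)) :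
    IsHomogeneousOn H Bᶜ d :=
  stmt6_general n r d H B hBcard hfix hnofix hd1 hd2 hO
end

section
/- Let n ≥ 8 and let H ≤ S_n be a subgroup such that {n−1, n} is an orbit of H on {1,…,n}. Let d be an integer with 3 ≤ d ≤ (n−2)/2 such that O_2(H) = O_3(H) = ⋯ = O_d(H). Then H acts d-homogeneously on {1,…,n−2}. -/
open Pointwise

/-!
Let `A = {a, b}ᶜ`, `K` the stabilizer of `a` in `H` (of index two), and `p k`, `s k` the numbers
of orbits of `H` and of `K` on `k`-subsets of `A`. Sorting `k`-sets by their intersection with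
`{a, b}` gives `O_{k+2}(H) = p (k + 2) + s (k + 1) + p k`. By Livingstone–Wagner `p` and `s` are
nondecreasing up to `d ≤ #A / 2`, so `O_d = O_2` forces `p (d - 2) = p 0`, `s (d - 1) = s 1` and
`p d = p 2`. Hence `p 1 = 1`: `H` is transitive on `A`, so `K` has at most two orbits there; two
orbits would have equal size and give three orbits on pairs, against `s 2 ≤ s 1 ≤ 2`. So `K` is
transitive on `A` too, and `p d = p 2 ≤ p (d - 1) ≤ s (d - 1) = s 1 = 1`.
-/

open Finset

section OrbitCount

variable {G Ω : Type*} [Group G] [DecidableEq Ω] [MulAction G Ω]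

abbrev SameOrbit (G : Type*) [Group G] [MulAction G Ω] (P : Finset Ω → Prop)
    (S T : {S : Finset Ω // P S}) : Prop :=
  ∃ g : G, g • S.val = T.val

theorem numOrbits_eq_card_quot (P : Finset Ω → Prop) :
    numOrbits G P = Nat.card (Quot (SameOrbit G P)) :=
  rfl

theorem sameOrbit_equivalence (P : Finset Ω → Prop) : Equivalence (SameOrbit G P) where
  refl _ := ⟨1, one_smul _ _⟩
  symm := fun ⟨g, hg⟩ => ⟨g⁻¹, by rw [← hg, inv_smul_smul]⟩
  trans := fun ⟨g, hg⟩ ⟨h, hh⟩ => ⟨h * g, by rw [mul_smul, hg, hh]⟩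

theorem sameOrbit_quot_mk_eq_iff {P : Finset Ω → Prop} {S T : {S : Finset Ω // P S}} :
    Quot.mk (SameOrbit G P) S = Quot.mk _ T ↔ ∃ g : G, g • S.val = T.val :=
  Quot.eq.trans (sameOrbit_equivalence P).eqvGen_iff

instance [Finite Ω] (P : Finset Ω → Prop) : Finite (Quot (SameOrbit G P)) :=
  Finite.of_surjective _ Quot.mk_surjective

theorem numOrbits_congr {P Q : Finset Ω → Prop} (h : ∀ S, P S ↔ Q S) :
    numOrbits G P = numOrbits G Q := by
  obtain rfl : P = Q := funext fun S => propext (h S)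
  rfl

theorem numOrbits_le_one_iff [Finite Ω] {P : Finset Ω → Prop} :
    numOrbits G P ≤ 1 ↔ ∀ S T, P S → P T → ∃ g : G, g • S = T := by
  rw [numOrbits_eq_card_quot, Finite.card_le_one_iff_subsingleton]
  refine ⟨fun h S T hS hT => sameOrbit_quot_mk_eq_iff.1 (Subsingleton.elim
    (Quot.mk _ ⟨S, hS⟩) (Quot.mk _ ⟨T, hT⟩)), fun h => ⟨fun q q' => ?_⟩⟩
  induction q using Quot.ind with | _ S => ?_
  induction q' using Quot.ind with | _ T => ?_
  exact Quot.sound (h S T S.2 T.2)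

theorem one_le_numOrbits [Finite Ω] {P : Finset Ω → Prop} {S : Finset Ω} (hS : P S) :
    1 ≤ numOrbits G P :=
  have : Nonempty (Quot (SameOrbit G P)) := ⟨Quot.mk _ ⟨S, hS⟩⟩
  Nat.card_pos

theorem numOrbits_le_numOrbits_subgroup [Finite Ω] (K : Subgroup G) (P : Finset Ω → Prop) :
    numOrbits G P ≤ numOrbits K P :=
  Nat.card_le_card_of_surjective
    (Quot.lift (Quot.mk (SameOrbit G P)) fun _ _ ⟨u, hu⟩ => Quot.sound ⟨(u : G), hu⟩)
    (Quot.ind fun S => ⟨Quot.mk _ S, rfl⟩)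

theorem numOrbits_eq_of_rel_iff {K : Type*} [Group K] [MulAction K Ω]
    {P Q : Finset Ω → Prop} (φ : Finset Ω → Finset Ω) (hφ : ∀ S, P S → Q (φ S))
    (hrel : ∀ S S', P S → P S' → ((∃ g : G, g • S = S') ↔ ∃ k : K, k • φ S = φ S'))
    (hsurj : ∀ T, Q T → ∃ S, P S ∧ ∃ k : K, k • φ S = T) :
    numOrbits G P = numOrbits K Q := by
  let F : Quot (SameOrbit G P) → Quot (SameOrbit K Q) :=
    Quot.lift (fun S => Quot.mk _ ⟨φ S, hφ S S.2⟩)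
      fun S S' h => Quot.sound ((hrel S S' S.2 S'.2).1 h)
  refine Nat.card_congr (Equiv.ofBijective F ⟨fun q q' => ?_, fun q => ?_⟩)
  · induction q using Quot.ind with | _ S => ?_
    induction q' using Quot.ind with | _ S' => ?_
    intro h
    exact Quot.sound ((hrel S S' S.2 S'.2).2 (sameOrbit_quot_mk_eq_iff.1 h))
  · induction q using Quot.ind with | _ T => ?_
    obtain ⟨S, hS, hST⟩ := hsurj T T.2
    exact ⟨Quot.mk _ ⟨S, hS⟩, Quot.sound hST⟩

theorem numOrbits_eq_sum [Finite Ω] {ι : Type*} {P : Finset Ω → Prop} (f : Finset Ω → ι)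
    (hf : ∀ (g : G) S, f (g • S) = f S) (s : Finset ι) (hs : ∀ S, P S → f S ∈ s) :
    numOrbits G P = ∑ i ∈ s, numOrbits G (fun S => P S ∧ f S = i) := by
  let F : (Σ i : s, Quot (SameOrbit G (fun S => P S ∧ f S = i))) → Quot (SameOrbit G P) :=
    fun x => Quot.lift (fun S : {S // P S ∧ f S = x.1} => Quot.mk _ ⟨S.1, S.2.1⟩)
      (fun _ _ h => Quot.sound h) x.2
  simp only [← Finset.sum_coe_sort s, numOrbits_eq_card_quot]
  rw [← Nat.card_sigma]
  refine (Nat.card_congr (Equiv.ofBijective F ⟨?_, fun q => ?_⟩)).symm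
  · rintro ⟨i, q⟩ ⟨j, q'⟩
    induction q using Quot.ind with | _ S => ?_
    induction q' using Quot.ind with | _ T => ?_
    intro h
    obtain ⟨g, hg⟩ := sameOrbit_quot_mk_eq_iff.1 h
    obtain rfl : i = j := Subtype.ext (by rw [← S.2.2, ← T.2.2, ← hg, hf])
    exact congrArg (Sigma.mk i) (Quot.sound ⟨g, hg⟩)
  · induction q using Quot.ind with | _ S => ?_
    exact ⟨⟨⟨f S, hs S S.2⟩, Quot.mk _ ⟨S, S.2, rfl⟩⟩, rfl⟩

theorem numOrbits_subgroup_le_index [Finite Ω] (K : Subgroup G) [K.FiniteIndex]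
    {P : Finset Ω → Prop} (hP : ∀ (g : G) S, P S → P (g • S)) (hG : numOrbits G P ≤ 1) :
    numOrbits K P ≤ K.index := by
  rcases isEmpty_or_nonempty {S // P S} with _ | ⟨S₀, hS₀⟩
  · simp [numOrbits_eq_card_quot]
  let F : G ⧸ K → Quot (SameOrbit K P) :=
    Quotient.lift (fun g => Quot.mk _ ⟨g⁻¹ • S₀, hP _ _ hS₀⟩) fun g g' h => Quot.sound
      ⟨⟨(g⁻¹ * g')⁻¹, K.inv_mem (QuotientGroup.leftRel_apply.1 h)⟩, by simp [mul_smul]⟩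
  refine Nat.card_le_card_of_surjective F fun q => ?_
  induction q using Quot.ind with | _ S => ?_
  obtain ⟨g, hg⟩ := numOrbits_le_one_iff.1 hG S₀ S hS₀ S.2
  exact ⟨QuotientGroup.mk g⁻¹, Quot.sound ⟨1, by simp [hg]⟩⟩

noncomputable abbrev numOrbitsOn (G : Type*) [Group G] [MulAction G Ω] (A : Finset Ω) (k : ℕ) :
    ℕ :=
  numOrbits G (· ∈ A.powersetCard k)

end OrbitCount

section InclusionMatrix

variable {Ω R : Type*} [DecidableEq Ω]

theorem sum_sq_sum_filter [CommSemiring R] {α β : Type*} (s : Finset β) (t : Finset α)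
    (r : α → β → Prop) [∀ a b, Decidable (r a b)] (F : α → R) :
    ∑ S ∈ s, (∑ T ∈ t with r T S, F T) ^ 2 =
      ∑ T ∈ t, ∑ T' ∈ t, (#{S ∈ s | r T S ∧ r T' S} : R) * (F T * F T') := by
  simp_rw [sq, sum_filter, sum_mul_sum, ite_zero_mul_ite_zero]
  rw [sum_comm]
  refine sum_congr rfl fun T _ => ?_
  rw [sum_comm]
  refine sum_congr rfl fun T' _ => ?_
  rw [← sum_filter, sum_const, nsmul_eq_mul]

theorem card_filter_powersetCard_superset {A U : Finset Ω} (hU : U ⊆ A) {n : ℕ} (hn : #U ≤ n) :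
    #{S ∈ A.powersetCard n | U ⊆ S} = (#A - #U).choose (n - #U) := by
  rw [filter_powersetCard_subset U A n hU hn, card_image_of_injOn, card_powersetCard,
    card_sdiff_of_subset hU]
  intro x hx y hy hxy
  have hdisj : ∀ z ∈ (A \ U).powersetCard (n - #U), Disjoint z U := fun z hz =>
    disjoint_of_subset_left (mem_powersetCard.1 hz).1 sdiff_disjoint
  rw [← union_sdiff_cancel_right (hdisj x hx), ← union_sdiff_cancel_right (hdisj y hy)]
  exact congrArg (· \ U) hxy

theorem filter_powersetCard_subset_of_subset {A V : Finset Ω} (hV : V ⊆ A) (n : ℕ) :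
    {D ∈ A.powersetCard n | D ⊆ V} = V.powersetCard n := by
  ext D
  simp only [mem_filter, mem_powersetCard]
  exact ⟨fun ⟨⟨_, h⟩, hD⟩ => ⟨hD, h⟩, fun ⟨hD, h⟩ => ⟨⟨hD.trans hV, h⟩, hD⟩⟩

/-- Entrywise, `Wᵀ W = Dᵀ D + (#A - 2 (j + 1)) I` for the inclusion matrices `W` of
`(j+1)`-sets in `(j+2)`-sets and `D` of `j`-sets in `(j+1)`-sets of `A`. -/
theorem card_filter_superset_pair [CommRing R] {A T T' : Finset Ω} {j : ℕ}
    (hT : T ∈ A.powersetCard (j + 1)) (hT' : T' ∈ A.powersetCard (j + 1)) :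
    (#{S ∈ A.powersetCard (j + 2) | T ⊆ S ∧ T' ⊆ S} : R) =
      #{D ∈ A.powersetCard j | D ⊆ T ∧ D ⊆ T'} + if T = T' then (#A : R) - 2 * (j + 1) else 0 := by
  rw [mem_powersetCard] at hT hT'
  simp_rw [← union_subset_iff, ← subset_inter_iff,
    filter_powersetCard_subset_of_subset (inter_subset_left.trans hT.1), card_powersetCard]
  have hunion := card_union_add_card_inter T T'
  have hinter : #(T ∩ T') ≤ j + 1 := hT.2 ▸ card_le_card inter_subset_left
  split_ifs with hTT'
  · subst hTT'
    rw [union_self, inter_self, card_filter_powersetCard_superset hT.1 (by omega), hT.2,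
      show j + 2 - (j + 1) = 1 by omega, Nat.choose_one_right, Nat.choose_succ_self_right,
      Nat.cast_sub (hT.2 ▸ card_le_card hT.1)]
    push_cast
    ring
  · have hlt : #(T ∩ T') < j + 1 := by
      refine lt_of_le_of_ne hinter fun h => hTT' ?_
      have h1 : T ∩ T' = T := eq_of_subset_of_card_le inter_subset_left (by omega)
      have h2 : T ∩ T' = T' := eq_of_subset_of_card_le inter_subset_right (by omega)
      exact h1.symm.trans h2
    rcases (Nat.lt_succ_iff.1 hlt).eq_or_lt with h | h
    · rw [card_filter_powersetCard_superset (union_subset hT.1 hT'.1) (by omega), h,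
        show j + 2 - #(T ∪ T') = 0 by omega, Nat.choose_zero_right, Nat.choose_self]
      simp
    · rw [Nat.choose_eq_zero_of_lt h, card_eq_zero.2 (filter_eq_empty_iff.2 fun S hS hTS => by
        have := card_le_card hTS
        rw [(mem_powersetCard.1 hS).2] at this
        omega)]
      simp

theorem sum_sq_sum_subset_eq [CommRing R] (A : Finset Ω) (j : ℕ) (F : Finset Ω → R) :
    ∑ S ∈ A.powersetCard (j + 2), (∑ T ∈ A.powersetCard (j + 1) with T ⊆ S, F T) ^ 2 =
      ∑ D ∈ A.powersetCard j, (∑ T ∈ A.powersetCard (j + 1) with D ⊆ T, F T) ^ 2 +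
        ((#A : R) - 2 * (j + 1)) * ∑ T ∈ A.powersetCard (j + 1), F T ^ 2 := by
  have hdown := sum_sq_sum_filter (A.powersetCard j) (A.powersetCard (j + 1))
    (fun T D => D ⊆ T) F
  rw [sum_sq_sum_filter, hdown, mul_sum, ← sum_add_distrib]
  refine sum_congr rfl fun T hT => ?_
  have hdiag : ((#A : R) - 2 * (j + 1)) * (F T * F T) = ∑ T' ∈ A.powersetCard (j + 1),
      if T = T' then ((#A : R) - 2 * (j + 1)) * (F T * F T') else 0 := by
    rw [sum_ite_eq, if_pos hT]
  rw [sq, hdiag, ← sum_add_distrib]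
  refine sum_congr rfl fun T' hT' => ?_
  rw [card_filter_superset_pair hT hT']
  split_ifs <;> ring

theorem eq_zero_of_sum_subset_eq_zero [CommRing R] [LinearOrder R] [IsStrictOrderedRing R]
    {A : Finset Ω} {k : ℕ} (hk : 2 * k < #A) {F : Finset Ω → R}
    (hF : ∀ S ∈ A.powersetCard (k + 1), ∑ T ∈ A.powersetCard k with T ⊆ S, F T = 0) :
    ∀ T ∈ A.powersetCard k, F T = 0 := by
  cases k with
  | zero =>
    obtain ⟨x, hx⟩ := card_pos.1 (by omega : 0 < #A)
    have := hF {x} (mem_powersetCard.2 ⟨singleton_subset_iff.2 hx, card_singleton x⟩)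
    rw [powersetCard_zero, filter_singleton, if_pos (empty_subset _), sum_singleton] at this
    simp [this]
  | succ j =>
    have hsum := sum_sq_sum_subset_eq A j F
    rw [sum_eq_zero fun S hS => by rw [hF S hS]; ring] at hsum
    have hc : (0 : R) < #A - 2 * (j + 1) := by
      rw [sub_pos]
      exact_mod_cast hk
    have hdown : 0 ≤ ∑ D ∈ A.powersetCard j, (∑ T ∈ A.powersetCard (j + 1) with D ⊆ T, F T) ^ 2 :=
      sum_nonneg fun _ _ => sq_nonneg _
    have hsq : ∑ T ∈ A.powersetCard (j + 1), F T ^ 2 = 0 := by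
      nlinarith [sum_nonneg fun T (_ : T ∈ A.powersetCard (j + 1)) => sq_nonneg (F T)]
    intro T hT
    exact pow_eq_zero_iff two_ne_zero |>.1 <|
      (sum_eq_zero_iff_of_nonneg fun T _ => sq_nonneg (F T)).1 hsq T hT

end InclusionMatrix

theorem mem_span_range_indicator_of_respects {R X : Type*} [CommRing R] {r : X → X → Prop}
    [Finite (Quot r)] (f : X → R) (hf : ∀ x y, r x y → f x = f y) :
    f ∈ Submodule.span R (Set.range fun q : Quot r => (Quot.mk r ⁻¹' {q}).indicator 1) := by
  classical
  have := Fintype.ofFinite (Quot r)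
  have hf_eq : f = ∑ q : Quot r, Quot.lift f hf q • (Quot.mk r ⁻¹' {q}).indicator 1 := by
    ext x
    simp [Finset.sum_apply, Set.indicator_apply]
  rw [hf_eq]
  exact Submodule.sum_mem _ fun q _ => Submodule.smul_mem _ _ (Submodule.subset_span ⟨q, rfl⟩)

theorem natCard_le_of_linearIndependent_of_mem_span {K M ι κ : Type*} [Field K] [AddCommGroup M]
    [Module K M] [Finite κ] {v : ι → M} (hv : LinearIndependent K v) (w : κ → M)
    (hvw : ∀ i, v i ∈ Submodule.span K (Set.range w)) : Nat.card ι ≤ Nat.card κ := by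
  classical
  have := Fintype.ofFinite κ
  have hι : Finite ι := hv.finite_of_le_span_finite v (Set.range w)
    (Set.range_subset_iff.2 hvw)
  have h := linearIndependent_le_span' v hv (Set.range w) (Set.range_subset_iff.2 hvw)
  rw [← Nat.cast_card] at h
  exact (Nat.cast_le.1 h).trans (Nat.card_eq_fintype_card (α := κ) ▸ Fintype.card_range_le w)

section LivingstoneWagner

variable {G Ω : Type*} [Group G] [DecidableEq Ω] [MulAction G Ω]

theorem smul_mem_powersetCard {A : Finset Ω} (hA : ∀ g : G, g • A = A) (g : G) {k : ℕ}
    {T : Finset Ω} (hT : T ∈ A.powersetCard k) : g • T ∈ A.powersetCard k := by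
  rw [mem_powersetCard] at hT ⊢
  exact ⟨hA g ▸ smul_finset_subset_smul_finset hT.1, (card_smul_finset g T).trans hT.2⟩

theorem sum_filter_subset_smul_finset {R : Type*} [AddCommMonoid R] {A : Finset Ω}
    (hA : ∀ g : G, g • A = A) {k : ℕ} {F : Finset Ω → R}
    (hF : ∀ (g : G), ∀ T ∈ A.powersetCard k, F (g • T) = F T) (g : G) (S : Finset Ω) :
    ∑ T ∈ A.powersetCard k with T ⊆ g • S, F T = ∑ T ∈ A.powersetCard k with T ⊆ S, F T := by
  refine sum_nbij' (g⁻¹ • ·) (g • ·) (fun T hT => ?_) (fun T hT => ?_)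
    (fun T _ => smul_inv_smul g T) (fun T _ => inv_smul_smul g T) fun T hT => ?_
  · simp only [mem_filter] at hT ⊢
    refine ⟨smul_mem_powersetCard hA g⁻¹ hT.1, ?_⟩
    simpa using smul_finset_subset_smul_finset (a := g⁻¹) hT.2
  · simp only [mem_filter] at hT ⊢
    exact ⟨smul_mem_powersetCard hA g hT.1, smul_finset_subset_smul_finset hT.2⟩
  · exact (hF g⁻¹ T (mem_filter.1 hT).1).symm

/-- Livingstone–Wagner. Summing the indicator of a `k`-set orbit over the `k`-subsets of each
`(k+1)`-set gives invariant functions, hence in the span of the `(k+1)`-set orbit indicators,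
and they stay linearly independent by `eq_zero_of_sum_subset_eq_zero`. -/
theorem numOrbitsOn_le_succ [Finite Ω] {A : Finset Ω} (hA : ∀ g : G, g • A = A) {k : ℕ}
    (hk : 2 * k < #A) : numOrbitsOn G A k ≤ numOrbitsOn G A (k + 1) := by
  classical
  let χ (o : Quot (SameOrbit G (· ∈ A.powersetCard k))) (T : Finset Ω) : ℚ :=
    if h : T ∈ A.powersetCard k then if Quot.mk _ ⟨T, h⟩ = o then 1 else 0 else 0
  let v (o : Quot (SameOrbit G (· ∈ A.powersetCard k)))
      (S : {S : Finset Ω // S ∈ A.powersetCard (k + 1)}) : ℚ :=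
    ∑ T ∈ A.powersetCard k with T ⊆ S.1, χ o T
  have hχ (o) (g : G) : ∀ T ∈ A.powersetCard k, χ o (g • T) = χ o T := by
    intro T hT
    have hgT := smul_mem_powersetCard hA g hT
    have hmk : Quot.mk (SameOrbit G (· ∈ A.powersetCard k)) ⟨g • T, hgT⟩ = Quot.mk _ ⟨T, hT⟩ :=
      Quot.sound ⟨g⁻¹, inv_smul_smul g T⟩
    simp only [χ, dif_pos hT, dif_pos hgT, hmk]
  refine natCard_le_of_linearIndependent_of_mem_span (v := v) ?_ _ fun o =>
    mem_span_range_indicator_of_respects (v o) ?_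
  · have := Fintype.ofFinite (Quot (SameOrbit G (· ∈ A.powersetCard k)))
    rw [Fintype.linearIndependent_iff]
    intro c hc o
    have hzero := eq_zero_of_sum_subset_eq_zero hk (F := fun T => ∑ o, c o * χ o T)
      fun S hS => by
        have := congrFun hc ⟨S, hS⟩
        simp only [v, Finset.sum_apply, Pi.smul_apply, smul_eq_mul, mul_sum, Pi.zero_apply] at this
        rw [sum_comm]
        exact this
    induction o using Quot.ind with | _ T => ?_
    have := hzero T.1 T.2
    simp only [χ, dif_pos T.2, mul_ite, mul_one, mul_zero] at this
    rwa [sum_ite_eq, if_pos (mem_univ _)] at this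
  · rintro S S' ⟨g, hg⟩
    simp only [v, ← hg]
    exact (sum_filter_subset_smul_finset hA (hχ o) g S).symm

theorem numOrbitsOn_monotoneOn [Finite Ω] {A : Finset Ω} (hA : ∀ g : G, g • A = A) {m : ℕ}
    (hm : 2 * m ≤ #A) : MonotoneOn (numOrbitsOn G A) (Set.Iic m) :=
  monotoneOn_of_le_succ Set.ordConnected_Iic fun k _ _ hk =>
    numOrbitsOn_le_succ hA (by simp only [Order.succ_eq_add_one, Set.mem_Iic] at hk; omega)

end LivingstoneWagner

section SplitByPair

variable {G Ω : Type*} [Group G] [DecidableEq Ω] [MulAction G Ω]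

theorem smul_finset_compl_eq [Fintype Ω] {B : Finset Ω} {g : G} (hB : g • B = B) :
    g • Bᶜ = Bᶜ := by
  rw [compl_eq_univ_sdiff, smul_finset_sdiff, smul_finset_univ, hB]

theorem card_smul_finset_inter {B : Finset Ω} {g : G} (hB : g • B = B) (S : Finset Ω) :
    #((g • S) ∩ B) = #(S ∩ B) := by
  conv_lhs => rw [← hB, ← smul_finset_inter, card_smul_finset]

theorem numOrbits_inter_eq [Fintype Ω] {B C : Finset Ω} (hB : ∀ g : G, g • B = B)
    (hC : ∀ g : G, g • C = C) (hCB : C ⊆ B) (k : ℕ) :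
    numOrbits G (fun S => S ∩ B = C ∧ #S = k + #C) = numOrbitsOn G Bᶜ k := by
  have hsplit {S : Finset Ω} (h : S ∩ B = C) : S \ B ∪ C = S := by
    rw [← h, sdiff_union_inter]
  refine numOrbits_eq_of_rel_iff (· \ B) (fun S hS => ?_) (fun S S' hS hS' => ?_) fun T hT => ?_
  · have := card_sdiff_add_card_inter S B
    rw [hS.1, hS.2] at this
    exact mem_powersetCard.2 ⟨fun x hx => mem_compl.2 (mem_sdiff.1 hx).2, by omega⟩
  · refine ⟨fun ⟨g, hg⟩ => ⟨g, by rw [smul_finset_sdiff, hB, hg]⟩, fun ⟨g, hg⟩ => ⟨g, ?_⟩⟩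
    rw [← hsplit hS.1, ← hsplit hS'.1, smul_finset_union, hg, hC]
  · obtain ⟨hTB, hTk⟩ := mem_powersetCard.1 hT
    have hdisj : Disjoint T B := disjoint_left.2 fun x hx => mem_compl.1 (hTB hx)
    refine ⟨T ∪ C, ⟨?_, ?_⟩, 1, ?_⟩
    · rw [union_inter_distrib_right, disjoint_iff_inter_eq_empty.1 hdisj, empty_union,
        inter_eq_left.2 hCB]
    · rw [card_union_of_disjoint (hdisj.mono_right hCB), hTk]
    · rw [one_smul, union_sdiff_distrib, sdiff_eq_self_of_disjoint hdisj,
        sdiff_eq_empty_iff_subset.2 hCB, union_empty]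

variable {a b : Ω}

theorem smul_finset_pair_eq (horb : MulAction.orbit G a = {a, b}) (g : G) :
    g • ({a, b} : Finset Ω) = {a, b} := by
  have hb : b ∈ MulAction.orbit G a := horb ▸ Set.mem_insert_of_mem a rfl
  have hmem (x : Ω) (hx : x ∈ MulAction.orbit G a) : g • x ∈ ({a, b} : Finset Ω) := by
    have := MulAction.mem_orbit x g
    rw [MulAction.orbit_eq_iff.2 hx, horb] at this
    simpa using this
  refine eq_of_subset_of_card_le ?_ (card_smul_finset g _).ge
  rw [smul_finset_insert, smul_finset_singleton, insert_subset_iff, singleton_subset_iff]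
  exact ⟨hmem a (MulAction.mem_orbit_self a), hmem b hb⟩

/-- Every set meeting `{a, b}` in one point can be moved to one meeting it in `a`, and `g`
moves one such set to another only if it fixes `a`. -/
theorem numOrbits_card_inter_pair_eq_one (horb : MulAction.orbit G a = {a, b}) (m : ℕ) :
    numOrbits G (fun S => #S = m ∧ #(S ∩ {a, b}) = 1) =
      numOrbits (MulAction.stabilizer G a) (fun S => S ∩ {a, b} = {a} ∧ #S = m) := by
  refine (numOrbits_eq_of_rel_iff id (fun S hS => ⟨hS.2, by rw [id, hS.1, card_singleton]⟩)
    (fun S S' hS hS' => ⟨fun ⟨u, hu⟩ => ⟨u, hu⟩, ?_⟩) fun T hT => ?_).symm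
  · rintro ⟨g, hg : g • S = S'⟩
    have hga : g • a ∈ g • (S ∩ {a, b}) := by
      rw [hS.1, smul_finset_singleton]
      exact mem_singleton_self _
    rw [smul_finset_inter, smul_finset_pair_eq horb, hg, hS'.1] at hga
    exact ⟨⟨g, mem_singleton.1 hga⟩, hg⟩
  · obtain ⟨x, hx⟩ := card_eq_one.1 hT.2
    have hxab : x ∈ MulAction.orbit G a := by
      rw [horb]
      simpa using inter_subset_right (hx ▸ mem_singleton_self x : x ∈ T ∩ {a, b})
    obtain ⟨g, rfl⟩ := hxab
    refine ⟨g⁻¹ • T, ⟨?_, by rw [card_smul_finset, hT.1]⟩, g, smul_inv_smul g T⟩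
    · rw [← smul_finset_pair_eq horb g⁻¹, ← smul_finset_inter, hx, smul_finset_singleton,
        inv_smul_smul]

theorem numOrbits_card_add_two_eq [Fintype Ω] (horb : MulAction.orbit G a = {a, b}) (hab : a ≠ b)
    (k : ℕ) :
    numOrbits G (fun S : Finset Ω => #S = k + 2) =
      numOrbitsOn G {a, b}ᶜ (k + 2) + numOrbitsOn (MulAction.stabilizer G a) {a, b}ᶜ (k + 1) +
        numOrbitsOn G {a, b}ᶜ k := by
  have hB := smul_finset_pair_eq horb (G := G)
  have hpair := card_pair hab
  have hmeet0 : numOrbits G (fun S => #S = k + 2 ∧ #(S ∩ {a, b}) = 0) =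
      numOrbitsOn G {a, b}ᶜ (k + 2) := by
    refine (numOrbits_congr fun S => ?_).trans
      (numOrbits_inter_eq hB (smul_finset_empty (β := Ω)) (empty_subset _) (k + 2))
    rw [card_eq_zero, card_empty, add_zero, and_comm]
  have hmeet1 : numOrbits G (fun S => #S = k + 2 ∧ #(S ∩ {a, b}) = 1) =
      numOrbitsOn (MulAction.stabilizer G a) {a, b}ᶜ (k + 1) := by
    refine (numOrbits_card_inter_pair_eq_one horb _).trans <| (numOrbits_congr fun S => ?_).trans
      (numOrbits_inter_eq (G := MulAction.stabilizer G a) (fun u => hB u)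
        (fun u => by rw [smul_finset_singleton]; exact congrArg _ u.2)
        (singleton_subset_iff.2 (mem_insert_self a {b})) (k + 1))
    rw [card_singleton]
  have hmeet2 : numOrbits G (fun S => #S = k + 2 ∧ #(S ∩ {a, b}) = 2) =
      numOrbitsOn G {a, b}ᶜ k := by
    refine (numOrbits_congr fun S => ?_).trans (numOrbits_inter_eq hB hB subset_rfl k)
    rw [hpair, and_comm]
    exact and_congr_left' ⟨fun h => eq_of_subset_of_card_le inter_subset_right (by omega),
      fun h => by rw [h, hpair]⟩
  rw [numOrbits_eq_sum (fun S => #(S ∩ {a, b})) (fun g => card_smul_finset_inter (hB g))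
    (range 3) fun S _ => mem_range.2 (by
      have := card_le_card (inter_subset_right : S ∩ {a, b} ⊆ {a, b}); omega)]
  simp only [sum_range_succ, sum_range_zero, zero_add, hmeet0, hmeet1, hmeet2]

end SplitByPair

theorem exists_smul_eq_smul_iff_mem_of_index_eq_two {G Ω : Type*} [Group G] [MulAction G Ω]
    {K : Subgroup G} (hK : K.index = 2)
    {x : Ω} {h : G} (hxh : ∀ u : K, u • x ≠ h • x) (g : G) :
    (∃ u : K, u • x = g • x) ↔ g ∈ K := by
  refine ⟨fun ⟨u, (hu : (u : G) • x = g • x)⟩ => ?_, fun hg => ⟨⟨g, hg⟩, rfl⟩⟩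
  by_contra hg
  by_cases hh : h ∈ K
  · exact hxh ⟨h, hh⟩ rfl
  · have hhg : h * g⁻¹ ∈ K := (Subgroup.mul_mem_iff_of_index_two hK).2 (by simp [hh, hg])
    refine hxh (⟨h * g⁻¹, hhg⟩ * u) ?_
    change (h * g⁻¹ * u) • x = h • x
    rw [mul_smul, hu, mul_smul, inv_smul_smul]

section IndexTwo

variable {G Ω : Type*} [Group G] [DecidableEq Ω] [MulAction G Ω]

theorem numOrbitsOn_one_le_one_iff [Finite Ω] {A : Finset Ω} :
    numOrbitsOn G A 1 ≤ 1 ↔ ∀ x ∈ A, ∀ y ∈ A, ∃ g : G, g • x = y := by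
  simp only [numOrbits_le_one_iff, powersetCard_one, mem_map, Function.Embedding.coeFn_mk]
  refine ⟨fun h x hx y hy => ?_, ?_⟩
  · obtain ⟨g, hg⟩ := h {x} {y} ⟨x, hx, rfl⟩ ⟨y, hy, rfl⟩
    exact ⟨g, singleton_injective (by rwa [smul_finset_singleton] at hg)⟩
  · rintro h _ _ ⟨x, hx, rfl⟩ ⟨y, hy, rfl⟩
    obtain ⟨g, hg⟩ := h x hx y hy
    exact ⟨g, by rw [smul_finset_singleton, hg]⟩

/-- An element `t ∉ K` swaps the points `g • x` with `g ∈ K` and those with `g ∉ K`. -/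
theorem card_filter_eq_card_filter_not_of_index_eq_two {K : Subgroup G} (hK : K.index = 2)
    {A : Finset Ω} (hA : ∀ g : G, g • A = A) {x : Ω}
    (htrans : ∀ y ∈ A, ∃ g : G, g • x = y) (p : Ω → Prop) [DecidablePred p]
    (hp : ∀ g : G, p (g • x) ↔ g ∈ K) :
    #{z ∈ A | p z} = #{z ∈ A | ¬ p z} := by
  obtain ⟨t, ht⟩ : ∃ t : G, t ∉ K := by
    by_contra! h
    have := Subgroup.index_eq_one.2 (eq_top_iff.2 fun t _ => h t)
    omega
  have hswap {z : Ω} (hz : z ∈ A) : p (t • z) ↔ ¬ p z := by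
    obtain ⟨g, rfl⟩ := htrans z hz
    rw [← mul_smul, hp, hp, Subgroup.mul_mem_iff_of_index_two hK]
    tauto
  have hsmul (g : G) {z : Ω} (hz : z ∈ A) : g • z ∈ A := hA g ▸ smul_mem_smul_finset hz
  refine card_nbij' (t • ·) (t⁻¹ • ·) (fun z hz => ?_) (fun z hz => ?_)
    (fun z _ => inv_smul_smul t z) fun z _ => smul_inv_smul t z
  · simp only [coe_filter, Set.mem_ofPred_eq] at hz ⊢
    exact ⟨hsmul t hz.1, fun h => (hswap hz.1).1 h hz.2⟩
  · simp only [coe_filter, Set.mem_ofPred_eq] at hz ⊢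
    have := hswap (hsmul t⁻¹ hz.1)
    rw [smul_inv_smul] at this
    exact ⟨hsmul t⁻¹ hz.1, by tauto⟩

theorem three_le_numOrbitsOn_two [Finite Ω] {A : Finset Ω} (p : Ω → Prop) [DecidablePred p]
    (hp : ∀ (g : G) z, p (g • z) ↔ p z) (hin : 1 < #{z ∈ A | p z})
    (hout : 1 < #{z ∈ A | ¬ p z}) :
    3 ≤ numOrbitsOn G A 2 := by
  obtain ⟨x₁, hx₁, x₂, hx₂, hx₁₂⟩ := one_lt_card.1 hin
  obtain ⟨y₁, hy₁, y₂, hy₂, hy₁₂⟩ := one_lt_card.1 hout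
  rw [mem_filter] at hx₁ hx₂ hy₁ hy₂
  have hinv (g : G) (S : Finset Ω) : #{z ∈ g • S | p z} = #{z ∈ S | p z} := by
    rw [smul_finset_def, filter_image, card_image_of_injective _ (MulAction.injective g)]
    exact congrArg card (filter_congr fun z _ => hp g z)
  have hpair {z w : Ω} (hz : z ∈ A) (hw : w ∈ A) (hzw : z ≠ w) : {z, w} ∈ A.powersetCard 2 :=
    mem_powersetCard.2 ⟨insert_subset hz (singleton_subset_iff.2 hw), card_pair hzw⟩
  rw [numOrbitsOn, numOrbits_eq_sum (fun S => #{z ∈ S | p z}) hinv (range 3) fun S hS =>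
    mem_range.2 ((card_filter_le S p).trans_lt (by rw [(mem_powersetCard.1 hS).2]; omega))]
  simp only [sum_range_succ, sum_range_zero, zero_add]
  have h0 := one_le_numOrbits (G := G) (P := fun S => S ∈ A.powersetCard 2 ∧ #{z ∈ S | p z} = 0)
    ⟨hpair hy₁.1 hy₂.1 hy₁₂, by simp [filter_eq_empty_iff, hy₁.2, hy₂.2]⟩
  have h1 := one_le_numOrbits (G := G) (P := fun S => S ∈ A.powersetCard 2 ∧ #{z ∈ S | p z} = 1)
    ⟨hpair hx₁.1 hy₁.1 fun h => hy₁.2 (h ▸ hx₁.2), by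
      simp [filter_insert, filter_singleton, hx₁.2, hy₁.2]⟩
  have h2 := one_le_numOrbits (G := G) (P := fun S => S ∈ A.powersetCard 2 ∧ #{z ∈ S | p z} = 2)
    ⟨hpair hx₁.1 hx₂.1 hx₁₂, by simp [filter_insert, filter_singleton, hx₁.2, hx₂.2, hx₁₂]⟩
  omega

/-- If `K` were not transitive on `A`, the `K`-orbit of a point and its complement in `A` would
have equal size, hence both at least two, and `K` would have three orbits on pairs. -/
theorem exists_smul_eq_of_index_eq_two [Finite Ω] {K : Subgroup G} (hK : K.index = 2)
    {A : Finset Ω} (hA : ∀ g : G, g • A = A) (htrans : ∀ x ∈ A, ∀ y ∈ A, ∃ g : G, g • x = y)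
    (hcard : 4 ≤ #A) (hpairs : numOrbitsOn K A 2 ≤ 2) :
    ∀ x ∈ A, ∀ y ∈ A, ∃ u : K, u • x = y := by
  classical
  intro x hx y hy
  by_contra! hxy
  obtain ⟨h, rfl⟩ := htrans x hx y hy
  let p (z : Ω) : Prop := ∃ u : K, u • x = z
  have hhalves := card_filter_eq_card_filter_not_of_index_eq_two hK hA (htrans x hx) p
    (exists_smul_eq_smul_iff_mem_of_index_eq_two hK hxy)
  have hpK (u : K) (z : Ω) : p (u • z) ↔ p z :=
    ⟨fun ⟨v, hv⟩ => ⟨u⁻¹ * v, by rw [mul_smul, hv, inv_smul_smul]⟩,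
      fun ⟨v, hv⟩ => ⟨u * v, by rw [mul_smul, hv]⟩⟩
  have hsum := card_filter_add_card_filter_not (s := A) fun z => p z
  have := three_le_numOrbitsOn_two (A := A) p hpK (by omega) (by omega)
  omega

end IndexTwo

section Homogeneity

variable {G Ω : Type*} [Group G] [DecidableEq Ω] [Fintype Ω] [MulAction G Ω] {a b : Ω}

theorem numOrbitsOn_compl_pair_le_one (horb : MulAction.orbit G a = {a, b}) (hab : a ≠ b)
    {m : ℕ} (hm : 1 ≤ m) (hcard : 2 * (m + 2) ≤ #({a, b}ᶜ : Finset Ω))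
    (hO : numOrbits G (fun S : Finset Ω => #S = m + 2) =
      numOrbits G (fun S : Finset Ω => #S = 2)) :
    numOrbitsOn G {a, b}ᶜ (m + 2) ≤ 1 := by
  set A : Finset Ω := {a, b}ᶜ
  set K := MulAction.stabilizer G a
  have hA (g : G) : g • A = A := smul_finset_compl_eq (smul_finset_pair_eq horb g)
  have hp {i j : ℕ} (hij : i ≤ j) (hj : j ≤ m + 2) : numOrbitsOn G A i ≤ numOrbitsOn G A j :=
    numOrbitsOn_monotoneOn hA hcard (hij.trans hj : i ≤ m + 2) hj hij
  have hs {i j : ℕ} (hij : i ≤ j) (hj : j ≤ m + 2) : numOrbitsOn K A i ≤ numOrbitsOn K A j :=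
    numOrbitsOn_monotoneOn (fun u : K => hA u) hcard (hij.trans hj : i ≤ m + 2) hj hij
  have hsplit : numOrbitsOn G A (m + 2) + numOrbitsOn K A (m + 1) + numOrbitsOn G A m =
      numOrbitsOn G A 2 + numOrbitsOn K A 1 + numOrbitsOn G A 0 := by
    have hO₂ : numOrbits G (fun S : Finset Ω => #S = 2) = _ :=
      numOrbits_card_add_two_eq horb hab 0
    rwa [numOrbits_card_add_two_eq horb hab, hO₂] at hO
  obtain ⟨hpm, hsm, hpm2⟩ : numOrbitsOn G A m = numOrbitsOn G A 0 ∧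
      numOrbitsOn K A (m + 1) = numOrbitsOn K A 1 ∧
      numOrbitsOn G A (m + 2) = numOrbitsOn G A 2 := by
    have := hp (Nat.zero_le m) (by omega)
    have := hs (by omega : 1 ≤ m + 1) (by omega)
    have := hp (by omega : 2 ≤ m + 2) le_rfl
    omega
  have hp0 : numOrbitsOn G A 0 ≤ 1 := numOrbits_le_one_iff.2 fun S T hS hT => ⟨1, by simp_all⟩
  have hp1 : numOrbitsOn G A 1 ≤ 1 := by
    have := hp (by omega : 1 ≤ m) (by omega)
    omega
  have hK : K.index = 2 := by rw [MulAction.index_stabilizer, horb, Set.ncard_pair hab]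
  have : K.FiniteIndex := ⟨by omega⟩
  have hs1 : numOrbitsOn K A 1 ≤ 2 :=
    hK ▸ numOrbits_subgroup_le_index K (fun g _ => smul_mem_powersetCard hA g) hp1
  have hs2 : numOrbitsOn K A 2 ≤ 2 := (hs (by omega) (by omega)).trans (hsm.trans_le hs1)
  have hKtrans := exists_smul_eq_of_index_eq_two hK hA (numOrbitsOn_one_le_one_iff.1 hp1)
    (by omega) hs2
  calc numOrbitsOn G A (m + 2) = numOrbitsOn G A 2 := hpm2
    _ ≤ numOrbitsOn G A (m + 1) := hp (by omega) (by omega)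
    _ ≤ numOrbitsOn K A (m + 1) := numOrbits_le_numOrbits_subgroup K _
    _ = numOrbitsOn K A 1 := hsm
    _ ≤ 1 := numOrbitsOn_one_le_one_iff.2 hKtrans

end Homogeneity

theorem stmt8_general (n d : ℕ)
    (H : Subgroup (Equiv.Perm (Fin n))) (a b : Fin n)
    (ha : (a : ℕ) = n - 2) (hb : (b : ℕ) = n - 1)
    (horb : MulAction.orbit H a = {a, b})
    (hd1 : 3 ≤ d) (hd2 : 2 * d ≤ n - 2)
    (hO : ∀ k, 2 ≤ k → k ≤ d →
      numOrbits H (fun S : Finset (Fin n) => S.card = k)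
        = numOrbits H (fun S : Finset (Fin n) => S.card = 2)) :
    IsHomogeneousOn H ({a, b} : Finset (Fin n))ᶜ d := by
  have hab : a ≠ b := fun h => by have := congrArg Fin.val h; omega
  obtain ⟨m, rfl⟩ : ∃ m, d = m + 2 := ⟨d - 2, by omega⟩
  have hcard : #({a, b}ᶜ : Finset (Fin n)) = n - 2 := by
    rw [card_compl, card_pair hab, Fintype.card_fin]
  have htrans := numOrbits_le_one_iff.1 <|
    numOrbitsOn_compl_pair_le_one horb hab (by omega) (by omega) (hO (m + 2) (by omega) le_rfl)
  intro S T hS hT hSc hTc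
  obtain ⟨g, hg⟩ := htrans S T (mem_powersetCard.2 ⟨hS, hSc⟩) (mem_powersetCard.2 ⟨hT, hTc⟩)
  exact ⟨g, g.2, hg⟩

/-- Lemma 3.7: if `{n-1, n}` (the last two points, here `a` and `b`) is an orbit of
`H ≤ S_n` for `n ≥ 8`, and `O_2(H) = ⋯ = O_d(H)` for some `3 ≤ d ≤ (n-2)/2`, then `H`
acts `d`-homogeneously on the remaining `n - 2` points. -/
theorem stmt8 (n d : ℕ) (hn : 8 ≤ n)
    (H : Subgroup (Equiv.Perm (Fin n))) (a b : Fin n)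
    (ha : (a : ℕ) = n - 2) (hb : (b : ℕ) = n - 1)
    (horb : MulAction.orbit H a = {a, b})
    (hd1 : 3 ≤ d) (hd2 : 2 * d ≤ n - 2)
    (hO : ∀ k, 2 ≤ k → k ≤ d →
      numOrbits H (fun S : Finset (Fin n) => S.card = k)
        = numOrbits H (fun S : Finset (Fin n) => S.card = 2)) :
    IsHomogeneousOn H ({a, b} : Finset (Fin n))ᶜ d :=
  stmt8_general n d H a b ha hb horb hd1 hd2 hO
end
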